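/- arXiv:2504.03138 — 6 statements merged into one kernel-verified Lean document; each statement's English description precedes it below -/
import Mathlib

section
/- Let G and F be r-uniform hypergraphs and suppose G is (r-1)-shadow-homomorphic to F via maps f and bijections g_S, g_E as in the definition. If E1, E2, E3 are three edges of G with |E1 ∩ E2| = |E1 ∩ E3| = |E2 ∩ E3| = r-1 and |E1 ∩ E2 ∩ E3| = r-2, then f(E1) ≠ f(E2). -/
/-- Shadow-homomorphism data: for each `S ∈ ∂_k G` a target `f S ∈ ∂_k F` together with
a bijection `g S : S → f S`, and for each edge `E` of `G` an edge `fE E` of `F` together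
with a bijection `gE E : E → fE E` restricting to `g S` on every `k`-subset `S` of `E`. -/
def ShadowHomData {α β : Type*} [DecidableEq β] (k : ℕ)
    (GE : Finset (Finset α)) (FE : Finset (Finset β))
    (f : Finset α → Finset β) (g : Finset α → α → β)
    (fE : Finset α → Finset β) (gE : Finset α → α → β) : Prop :=
  (∀ S : Finset α, (∃ e ∈ GE, S ⊆ e ∧ S.card = k) →
      (∃ e' ∈ FE, f S ⊆ e' ∧ (f S).card = k) ∧ S.image (g S) = f S) ∧
  ∀ E ∈ GE, fE E ∈ FE ∧ E.image (gE E) = fE E ∧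
      ∀ S ⊆ E, S.card = k → ∀ v ∈ S, gE E v = g S v

/-- The injectivity lemma: for an `(r-1)`-shadow-homomorphism between `r`-graphs,
three edges with pairwise intersections of size `r-1` and triple intersection of size
`r-2` have distinct images under the edge map. -/
theorem stmt_0 {α β : Type*} [DecidableEq α] [DecidableEq β] (r : ℕ) (hr : 2 ≤ r)
    (GE : Finset (Finset α)) (FE : Finset (Finset β))
    (hGr : ∀ e ∈ GE, e.card = r) (hFr : ∀ e ∈ FE, e.card = r)
    (f : Finset α → Finset β) (g : Finset α → α → β)
    (fE : Finset α → Finset β) (gE : Finset α → α → β)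
    (h : ShadowHomData (r - 1) GE FE f g fE gE)
    (E1 E2 E3 : Finset α) (h1 : E1 ∈ GE) (h2 : E2 ∈ GE) (h3 : E3 ∈ GE)
    (h12 : (E1 ∩ E2).card = r - 1) (h13 : (E1 ∩ E3).card = r - 1)
    (h23 : (E2 ∩ E3).card = r - 1) (h123 : (E1 ∩ E2 ∩ E3).card = r - 2) :
    fE E1 ≠ fE E2 := by
  intro hfe
  obtain ⟨hS, hE⟩ := h
  obtain ⟨hF1, hi1, hres1⟩ := hE E1 h1
  obtain ⟨hF2, hi2, hres2⟩ := hE E2 h2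
  obtain ⟨hF3, hi3, hres3⟩ := hE E3 h3
  have hc1 := hGr E1 h1
  have hc2 := hGr E2 h2
  have hc3 := hGr E3 h3
  -- extract a ∈ E1 \ E2
  have hd1 : (E1 \ (E1 ∩ E2)).card = 1 := by
    rw [Finset.card_sdiff_of_subset Finset.inter_subset_left, hc1, h12]; omega
  obtain ⟨a, ha⟩ := Finset.card_eq_one.mp hd1
  have ha' : a ∈ E1 \ (E1 ∩ E2) := ha ▸ Finset.mem_singleton_self a
  have haE1 : a ∈ E1 := (Finset.mem_sdiff.mp ha').1
  have haE2 : a ∉ E2 := fun hx => (Finset.mem_sdiff.mp ha').2 (Finset.mem_inter.mpr ⟨haE1, hx⟩)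
  -- extract b ∈ E2 \ E1
  have hd2 : (E2 \ (E1 ∩ E2)).card = 1 := by
    rw [Finset.card_sdiff_of_subset Finset.inter_subset_right, hc2, h12]; omega
  obtain ⟨b, hb⟩ := Finset.card_eq_one.mp hd2
  have hb' : b ∈ E2 \ (E1 ∩ E2) := hb ▸ Finset.mem_singleton_self b
  have hbE2 : b ∈ E2 := (Finset.mem_sdiff.mp hb').1
  have hbE1 : b ∉ E1 := fun hx => (Finset.mem_sdiff.mp hb').2 (Finset.mem_inter.mpr ⟨hx, hbE2⟩)
  have hab : a ≠ b := fun hh => haE2 (hh ▸ hbE2)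
  -- a ∈ E3
  have haE3 : a ∈ E3 := by
    have hsub : E1 ∩ E2 ∩ E3 ⊆ E1 ∩ E3 := by
      intro x hx
      simp only [Finset.mem_inter] at hx ⊢
      exact ⟨hx.1.1, hx.2⟩
    have hlt : (E1 ∩ E2 ∩ E3).card < (E1 ∩ E3).card := by rw [h123, h13]; omega
    obtain ⟨x, hx1, hx2⟩ := Finset.exists_of_ssubset
      (Finset.ssubset_iff_subset_ne.mpr ⟨hsub, fun hh => by rw [hh] at hlt; omega⟩)
    have hx1' := Finset.mem_inter.mp hx1
    have hxE2 : x ∉ E2 := fun hh => hx2 (by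
      simp only [Finset.mem_inter]; exact ⟨⟨hx1'.1, hh⟩, hx1'.2⟩)
    have : x ∈ E1 \ (E1 ∩ E2) := Finset.mem_sdiff.mpr
      ⟨hx1'.1, fun hh => hxE2 (Finset.mem_inter.mp hh).2⟩
    rw [ha, Finset.mem_singleton] at this
    exact this ▸ hx1'.2
  -- b ∈ E3
  have hbE3 : b ∈ E3 := by
    have hsub : E1 ∩ E2 ∩ E3 ⊆ E2 ∩ E3 := by
      intro x hx
      simp only [Finset.mem_inter] at hx ⊢
      exact ⟨hx.1.2, hx.2⟩
    have hlt : (E1 ∩ E2 ∩ E3).card < (E2 ∩ E3).card := by rw [h123, h23]; omega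
    obtain ⟨x, hx1, hx2⟩ := Finset.exists_of_ssubset
      (Finset.ssubset_iff_subset_ne.mpr ⟨hsub, fun hh => by rw [hh] at hlt; omega⟩)
    have hx1' := Finset.mem_inter.mp hx1
    have hxE1 : x ∉ E1 := fun hh => hx2 (by
      simp only [Finset.mem_inter]; exact ⟨⟨hh, hx1'.1⟩, hx1'.2⟩)
    have : x ∈ E2 \ (E1 ∩ E2) := Finset.mem_sdiff.mpr
      ⟨hx1'.1, fun hh => hxE1 (Finset.mem_inter.mp hh).1⟩
    rw [hb, Finset.mem_singleton] at this
    exact this ▸ hx1'.2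
  -- injectivity of gE E2, gE E3 on their edges
  have hinj2 : Set.InjOn (gE E2) ↑E2 := by
    apply Finset.card_image_iff.mp
    rw [hi2, hFr _ hF2, hc2]
  have hinj3 : Set.InjOn (gE E3) ↑E3 := by
    apply Finset.card_image_iff.mp
    rw [hi3, hFr _ hF3, hc3]
  -- gE E1 and gE E2 agree on E1 ∩ E2
  have hg12 : ∀ v ∈ E1 ∩ E2, gE E1 v = gE E2 v := fun v hv => by
    rw [hres1 _ Finset.inter_subset_left h12 v hv,
        hres2 _ Finset.inter_subset_right h12 v hv]
  -- gE E1 a = gE E3 a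
  have hg13 : gE E1 a = gE E3 a := by
    have hmem : a ∈ E1 ∩ E3 := Finset.mem_inter.mpr ⟨haE1, haE3⟩
    rw [hres1 _ Finset.inter_subset_left h13 a hmem,
        hres3 _ Finset.inter_subset_right h13 a hmem]
  -- gE E2 b = gE E3 b
  have hg23 : gE E2 b = gE E3 b := by
    have hmem : b ∈ E2 ∩ E3 := Finset.mem_inter.mpr ⟨hbE2, hbE3⟩
    rw [hres2 _ Finset.inter_subset_left h23 b hmem,
        hres3 _ Finset.inter_subset_right h23 b hmem]
  -- key: gE E1 a = gE E2 b
  have hkey : gE E1 a = gE E2 b := by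
    have hbmem : gE E2 b ∈ E1.image (gE E1) := by
      rw [hi1, hfe, ← hi2]; exact Finset.mem_image_of_mem _ hbE2
    obtain ⟨x, hxE1, hxeq⟩ := Finset.mem_image.mp hbmem
    have hxE2 : x ∉ E2 := by
      intro hx2
      have heq : gE E2 x = gE E2 b := by
        rw [← hg12 x (Finset.mem_inter.mpr ⟨hxE1, hx2⟩)]; exact hxeq
      exact hbE1 (hinj2 (Finset.mem_coe.mpr hx2) (Finset.mem_coe.mpr hbE2) heq ▸ hxE1)
    have : x ∈ E1 \ (E1 ∩ E2) := Finset.mem_sdiff.mpr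
      ⟨hxE1, fun hh => hxE2 (Finset.mem_inter.mp hh).2⟩
    rw [ha, Finset.mem_singleton] at this
    exact this ▸ hxeq
  have : gE E3 a = gE E3 b := by rw [← hg13, ← hg23]; exact hkey
  exact hab (hinj3 (Finset.mem_coe.mpr haE3) (Finset.mem_coe.mpr hbE3) this)
end

section
/- For all integers s ≥ r ≥ 2, the complete r-uniform hypergraph K^r_{s+1} on s+1 vertices is not (r-1)-shadow-homomorphic to the complete r-uniform hypergraph K^r_s on s vertices. -/
/-- `G` is `k`-shadow-homomorphic to `F`. -/
def IsShadowHom {α β : Type*} [DecidableEq β] (k : ℕ)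
    (GE : Finset (Finset α)) (FE : Finset (Finset β)) : Prop :=
  ∃ f g fE gE, ShadowHomData k GE FE f g fE gE

/-- For `s ≥ r ≥ 2`, the complete `r`-graph on `s+1` vertices is not
`(r-1)`-shadow-homomorphic to the complete `r`-graph on `s` vertices. -/
theorem stmt_1 (r s : ℕ) (hr : 2 ≤ r) (hrs : r ≤ s) :
    ¬ IsShadowHom (r - 1)
        ((Finset.univ : Finset (Fin (s + 1))).powersetCard r)
        ((Finset.univ : Finset (Fin s)).powersetCard r) := by
  rintro ⟨f, g, fE, gE, -, h2⟩
  -- choose a base set `B` of size `r - 2`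
  obtain ⟨B, -, hB⟩ := Finset.exists_subset_card_eq
    (s := (Finset.univ : Finset (Fin (s + 1)))) (n := r - 2) (by simp; omega)
  -- choose a vertex outside `B`
  have hcompl : (Bᶜ : Finset (Fin (s + 1))).Nonempty := by
    rw [← Finset.card_pos, Finset.card_compl, hB]
    simp
    omega
  obtain ⟨w₀, hw₀'⟩ := hcompl
  have hw₀ : w₀ ∉ B := Finset.mem_compl.mp hw₀'
  set c : Fin (s + 1) → Fin (s + 1) := fun v => if v ∈ B then w₀ else v with hc
  set T : Fin (s + 1) → Finset (Fin (s + 1)) := fun v => insert (c v) B with hTdef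
  have hcB : ∀ v, c v ∉ B := by
    intro v; by_cases h : v ∈ B <;> simp [hc, h, hw₀]
  have hTmem : ∀ v, v ∈ T v := by
    intro v
    by_cases h : v ∈ B
    · exact Finset.mem_insert_of_mem h
    · simp [hTdef, hc, h]
  have hTcard : ∀ v, (T v).card = r - 1 := by
    intro v
    rw [hTdef]
    rw [Finset.card_insert_of_notMem (hcB v), hB]
    omega
  have key : ∀ u v : Fin (s + 1), u ≠ v → g (T u) u ≠ g (T v) v := by
    intro u v huv
    have hle : (T u ∪ T v).card ≤ r := by
      have hsub : T u ∪ T v ⊆ insert (c u) (insert (c v) B) := by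
        rw [hTdef]
        apply Finset.union_subset
        · exact Finset.insert_subset_insert _ (Finset.subset_insert _ _)
        · exact Finset.subset_insert _ _
      calc (T u ∪ T v).card ≤ (insert (c u) (insert (c v) B)).card :=
            Finset.card_le_card hsub
        _ ≤ (insert (c v) B).card + 1 := Finset.card_insert_le _ _
        _ ≤ B.card + 1 + 1 := by
            have := Finset.card_insert_le (c v) B; omega
        _ ≤ r := by rw [hB]; omega
    obtain ⟨E, hsubE, -, hEcard⟩ := Finset.exists_subsuperset_card_eq
      (t := (Finset.univ : Finset (Fin (s + 1)))) (Finset.subset_univ (T u ∪ T v))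
      hle (by simp; omega)
    have hE : E ∈ (Finset.univ : Finset (Fin (s + 1))).powersetCard r :=
      Finset.mem_powersetCard.mpr ⟨Finset.subset_univ _, hEcard⟩
    obtain ⟨hfE, himg, hcompat⟩ := h2 E hE
    have hTuE : T u ⊆ E := Finset.union_subset_iff.mp hsubE |>.1
    have hTvE : T v ⊆ E := Finset.union_subset_iff.mp hsubE |>.2
    have hgu : gE E u = g (T u) u := hcompat (T u) hTuE (hTcard u) u (hTmem u)
    have hgv : gE E v = g (T v) v := hcompat (T v) hTvE (hTcard v) v (hTmem v)
    have hfEcard : (fE E).card = r := (Finset.mem_powersetCard.mp hfE).2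
    have hinj : Set.InjOn (gE E) E :=
      Finset.card_image_iff.mp (by rw [himg, hfEcard, hEcard])
    intro hEq
    exact huv (hinj (hTuE (hTmem u)) (hTvE (hTmem v)) (by rw [hgu, hgv, hEq]))
  have hinj : Function.Injective (fun v : Fin (s + 1) => g (T v) v) := by
    intro u v h
    by_contra hne
    exact key u v hne h
  have := Fintype.card_le_of_injective _ hinj
  simp at this
end

section
/- Let r ≥ 3 and 2 ≤ t ≤ r. Let H^r_t denote the unique r-uniform hypergraph on r+1 vertices with exactly t edges. Then H^r_{t+1} is not (r-1)-shadow-homomorphic to H^r_t. -/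
/-- The edge set of `H^r_t`, the `r`-graph on `r+1` vertices with `t` edges:
the edges are the complements of the first `t` vertices. -/
def Hedges (r t : ℕ) : Finset (Finset (Fin (r + 1))) :=
  (Finset.univ.filter (fun i : Fin (r + 1) => (i : ℕ) < t)).image
    (fun i => Finset.univ.erase i)

lemma mem_Hedges {r t : ℕ} {e : Finset (Fin (r + 1))} :
    e ∈ Hedges r t ↔ ∃ i : Fin (r + 1), (i : ℕ) < t ∧ e = Finset.univ.erase i := by
  simp [Hedges, eq_comm]

/-- For `r ≥ 3` and `2 ≤ t ≤ r`, `H^r_{t+1}` is not `(r-1)`-shadow-homomorphic to `H^r_t`. -/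
theorem stmt_2 (r t : ℕ) (hr : 3 ≤ r) (ht : 2 ≤ t) (htr : t ≤ r) :
    ¬ IsShadowHom (r - 1) (Hedges r (t + 1)) (Hedges r t) := by
  rintro ⟨f, g, fE, gE, h1, h2⟩
  have hr4 : 4 ≤ r + 1 := by omega
  -- edges of G
  have hEdgeG : ∀ i : Fin (r + 1), (i : ℕ) < t + 1 →
      Finset.univ.erase i ∈ Hedges r (t + 1) := by
    intro i hi; exact mem_Hedges.mpr ⟨i, hi, rfl⟩
  -- agreement: gE on two edges agree on common vertices
  have agree : ∀ i j v : Fin (r + 1), (i : ℕ) < t + 1 → (j : ℕ) < t + 1 →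
      v ≠ i → v ≠ j → gE (Finset.univ.erase i) v = gE (Finset.univ.erase j) v := by
    intro i j v hi hj hvi hvj
    rcases eq_or_ne i j with rfl | hij
    · rfl
    set S : Finset (Fin (r + 1)) := (Finset.univ.erase i).erase j with hS
    have hjmem : j ∈ Finset.univ.erase i :=
      Finset.mem_erase.mpr ⟨hij.symm, Finset.mem_univ j⟩
    have hScard : S.card = r - 1 := by
      rw [hS, Finset.card_erase_of_mem hjmem,
        Finset.card_erase_of_mem (Finset.mem_univ i), Finset.card_univ, Fintype.card_fin]
      omega
    have hSi : S ⊆ Finset.univ.erase i := Finset.erase_subset _ _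
    have hSj : S ⊆ Finset.univ.erase j := by
      intro x hx
      rw [hS] at hx
      simp only [Finset.mem_erase] at hx ⊢
      exact ⟨hx.1, Finset.mem_univ x⟩
    have hvS : v ∈ S := by
      rw [hS]; simp [hvi, hvj]
    have e1 := (h2 _ (hEdgeG i hi)).2.2 S hSi hScard v hvS
    have e2 := (h2 _ (hEdgeG j hj)).2.2 S hSj hScard v hvS
    rw [e1, e2]
  -- pick an index ≤ t different from v
  have hpick : ∀ v : Fin (r + 1), ∃ i : Fin (r + 1), (i : ℕ) < t + 1 ∧ i ≠ v := by
    intro v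
    rcases eq_or_ne (v : ℕ) 0 with h0 | h0
    · refine ⟨⟨1, by omega⟩, ?_, ?_⟩
      · show (1 : ℕ) < t + 1; omega
      · intro h; rw [← h] at h0; simp at h0
    · refine ⟨⟨0, by omega⟩, ?_, ?_⟩
      · show (0 : ℕ) < t + 1; omega
      · intro h; rw [← h] at h0; simp at h0
  choose pk hpk1 hpk2 using hpick
  set Φ : Fin (r + 1) → Fin (r + 1) := fun v => gE (Finset.univ.erase (pk v)) v with hΦ
  have hΦeq : ∀ i v : Fin (r + 1), (i : ℕ) < t + 1 → v ≠ i →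
      Φ v = gE (Finset.univ.erase i) v := by
    intro i v hi hvi
    exact agree (pk v) i v (hpk1 v) hi (hpk2 v).symm hvi
  -- gE on an edge is injective on the edge, with image univ.erase (σ i)
  have hedge : ∀ i : Fin (r + 1), (i : ℕ) < t + 1 →
      ∃ s : Fin (r + 1), (s : ℕ) < t ∧
        (Finset.univ.erase i).image (gE (Finset.univ.erase i)) = Finset.univ.erase s := by
    intro i hi
    obtain ⟨hmem, himg, -⟩ := h2 _ (hEdgeG i hi)
    obtain ⟨s, hs, hes⟩ := mem_Hedges.mp hmem
    exact ⟨s, hs, by rw [himg, hes]⟩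
  have hinj : ∀ i : Fin (r + 1), (i : ℕ) < t + 1 →
      Set.InjOn (gE (Finset.univ.erase i)) (Finset.univ.erase i : Finset (Fin (r + 1))) := by
    intro i hi
    obtain ⟨s, _, himg⟩ := hedge i hi
    apply Finset.injOn_of_card_image_eq
    rw [himg, Finset.card_erase_of_mem (Finset.mem_univ _),
      Finset.card_erase_of_mem (Finset.mem_univ _)]
  -- Φ is injective
  have hΦinj : Function.Injective Φ := by
    intro u v huv
    by_contra hne
    obtain ⟨i, hi, hiu, hiv⟩ : ∃ i : Fin (r + 1), (i : ℕ) < t + 1 ∧ i ≠ u ∧ i ≠ v := by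
      have huv' : (u : ℕ) ≠ (v : ℕ) := fun h => hne (Fin.val_injective h)
      have hex : ∃ n : ℕ, n < 3 ∧ n ≠ (u : ℕ) ∧ n ≠ (v : ℕ) := by
        by_cases h0 : (u : ℕ) = 0 ∨ (v : ℕ) = 0
        · by_cases h1 : (u : ℕ) = 1 ∨ (v : ℕ) = 1
          · exact ⟨2, by omega, by omega, by omega⟩
          · exact ⟨1, by omega, by omega, by omega⟩
        · exact ⟨0, by omega, by omega, by omega⟩
      obtain ⟨n, hn3, hnu, hnv⟩ := hex
      refine ⟨⟨n, by omega⟩, ?_, ?_, ?_⟩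
      · show n < t + 1; omega
      · intro h; exact hnu (by rw [← h])
      · intro h; exact hnv (by rw [← h])
    rw [hΦeq i u hi (Ne.symm hiu), hΦeq i v hi (Ne.symm hiv)] at huv
    exact hne (hinj i hi (by simp [Ne.symm hiu]) (by simp [Ne.symm hiv]) huv)
  have hΦsurj : Function.Surjective Φ := Finite.injective_iff_surjective.mp hΦinj
  -- Φ maps i with i < t+1 to something < t
  have hΦsmall : ∀ i : Fin (r + 1), (i : ℕ) < t + 1 → ((Φ i : Fin (r + 1)) : ℕ) < t := by
    intro i hi
    obtain ⟨s, hs, himg⟩ := hedge i hi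
    have h1' : (Finset.univ.erase i).image Φ = Finset.univ.erase s := by
      rw [← himg]
      apply Finset.image_congr
      intro v hv
      exact hΦeq i v hi (Finset.mem_erase.mp hv).1
    have h2' : (Finset.univ.erase i).image Φ = Finset.univ.erase (Φ i) := by
      rw [Finset.image_erase hΦinj, Finset.image_univ_of_surjective hΦsurj]
    have hkey : Finset.univ.erase (Φ i) = Finset.univ.erase s := by rw [← h2', h1']
    have hΦis : Φ i = s := by
      by_contra hne
      have : Φ i ∈ Finset.univ.erase s := Finset.mem_erase.mpr ⟨hne, Finset.mem_univ _⟩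
      rw [← hkey, Finset.mem_erase] at this
      exact this.1 rfl
    rw [hΦis]; exact hs
  -- cardinality of the filtered sets
  have cardfilt : ∀ m, m ≤ r + 1 →
      (Finset.univ.filter (fun i : Fin (r + 1) => (i : ℕ) < m)).card = m := by
    intro m hm
    rw [← Finset.card_image_of_injective _ Fin.val_injective]
    have : (Finset.univ.filter (fun i : Fin (r + 1) => (i : ℕ) < m)).image Fin.val
        = Finset.range m := by
      ext n
      simp only [Finset.mem_image, Finset.mem_filter, Finset.mem_univ, true_and,
        Finset.mem_range]
      constructor
      · rintro ⟨i, hi, rfl⟩; exact hi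
      · intro hn; exact ⟨⟨n, by omega⟩, hn, rfl⟩
    rw [this, Finset.card_range]
  -- final contradiction
  have hcard := Finset.card_le_card_of_injOn Φ
    (s := Finset.univ.filter (fun i : Fin (r + 1) => (i : ℕ) < t + 1))
    (t := Finset.univ.filter (fun i : Fin (r + 1) => (i : ℕ) < t))
    (fun i hi => by
      simp only [Finset.mem_coe, Finset.mem_filter, Finset.mem_univ, true_and] at hi ⊢
      exact hΦsmall i hi)
    (fun a _ b _ h => hΦinj h)
  rw [cardfilt (t + 1) (by omega), cardfilt t (by omega)] at hcard
  omega
end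

section
/- Let F and G be r-uniform hypergraphs with r ≥ 3. If G is 2-tightly connected and G is not homomorphic to F, then G is not a subgraph of any F-iterated blowup. -/
universe u v

/-- The edge set of the blowup `G(v, F)`: the vertex `v` is replaced by the whole vertex
set of `F` (`v` together with `v(F)-1` copies of `v`), each copy inheriting the
edge-incidences of `v`, and the copies of `v` spanning a copy of `F`. -/
def blowupSet {V β : Type u} (GE : Set (Set V)) (v : V) (FE : Set (Set β)) :
    Set (Set ({a : V // a ≠ v} ⊕ β)) :=
  {E | ∃ e ∈ GE, v ∉ e ∧ E = Sum.inl '' {x : {a : V // a ≠ v} | (x : V) ∈ e}} ∪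
  {E | ∃ e ∈ GE, v ∈ e ∧ ∃ b : β,
      E = insert (Sum.inr b) (Sum.inl '' {x : {a : V // a ≠ v} | (x : V) ∈ e})} ∪
  {E | ∃ e ∈ FE, E = Sum.inr '' e}

/-- `F`-iterated blowups: `F` itself is one, and blowing up a vertex of an `F`-iterated
blowup by `F` gives another one. -/
inductive IsIterBlowup {β : Type u} (FE : Set (Set β)) : ∀ (V : Type u), Set (Set V) → Prop
  | base : IsIterBlowup FE β FE
  | step {V : Type u} (GE : Set (Set V)) (v : V) :
      IsIterBlowup FE V GE → IsIterBlowup FE ({a : V // a ≠ v} ⊕ β) (blowupSet GE v FE)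

/-- `G` is `k`-tightly connected: its edges can be ordered so that every edge after the
first meets some earlier edge in at least `k` vertices. -/
def TightlyConn {γ : Type*} (k : ℕ) (GE : Set (Set γ)) : Prop :=
  ∃ l : List (Set γ), l.Nodup ∧ (∀ e, e ∈ GE ↔ e ∈ l) ∧
    ∀ i : Fin l.length, 0 < (i : ℕ) →
      ∃ j : Fin l.length, (j : ℕ) < (i : ℕ) ∧ k ≤ (l.get i ∩ l.get j).ncard


section Aux

open Set

private lemma edgeFinite {γ : Type u} {r : ℕ} (hr : 3 ≤ r) {e : Set γ} (he : e.ncard = r) :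
    e.Finite := by
  rcases e.finite_or_infinite with h | h
  · exact h
  · exfalso; rw [h.ncard] at he; omega

private lemma iterBlowup_key {β γ : Type u} (r : ℕ) (hr : 3 ≤ r)
    (FE : Set (Set β)) (GE : Set (Set γ))
    (hGr : ∀ e ∈ GE, e.ncard = r) (htc : TightlyConn 2 GE) :
    ∀ {V : Type u} {BE : Set (Set V)}, IsIterBlowup FE V BE →
      ∀ φ : γ → V, (∀ e ∈ GE, φ '' e ∈ BE ∧ Set.InjOn φ e) →
      ∃ ψ : γ → β, ∀ e ∈ GE, ψ '' e ∈ FE ∧ Set.InjOn ψ e := by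
  intro V BE h
  induction h with
  | base => exact fun φ hφ => ⟨φ, hφ⟩
  | @step W HE v hIB ih =>
    intro φ hφ
    by_cases hGE : GE = ∅
    · exact ih (Sum.elim Subtype.val (fun _ => v) ∘ φ) (by simp [hGE])
    -- GE nonempty
    have hne : GE.Nonempty := Set.nonempty_iff_ne_empty.2 hGE
    set P : Set γ → Prop := fun e => φ '' e ⊆ Set.range Sum.inr with hP
    -- edge images have ncard r
    have hncard : ∀ e ∈ GE, (φ '' e).ncard = r := fun e he => by
      rw [Set.ncard_image_of_injOn (hφ e he).2]; exact hGr e he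
    -- claim 1
    have claim1 : ∀ e ∈ GE, ¬ P e → (φ '' e ∩ Set.range Sum.inr).ncard ≤ 1 := by
      intro e he hnPe
      rcases (hφ e he).1 with (⟨e', _, hv, hE⟩ | ⟨e', _, hv, b, hE⟩) | ⟨f, _, hE⟩
      · have : φ '' e ∩ Set.range Sum.inr = ∅ := by
          ext y
          simp only [Set.mem_inter_iff, Set.mem_empty_iff_false, iff_false, not_and]
          rintro hy ⟨b, rfl⟩
          rw [hE] at hy
          rcases hy with ⟨a, -, ha⟩
          exact Sum.inl_ne_inr ha
        simp [this]
      · have : φ '' e ∩ Set.range Sum.inr = {Sum.inr b} := by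
          ext y
          constructor
          · rintro ⟨hy, b', rfl⟩
            rw [hE] at hy
            rcases hy with hy | ⟨a, -, ha⟩
            · exact hy
            · exact absurd ha Sum.inl_ne_inr
          · rintro rfl
            exact ⟨by rw [hE]; exact Set.mem_insert _ _, b, rfl⟩
        simp [this]
      · exact absurd (by show φ '' e ⊆ Set.range Sum.inr; rw [hE]; exact Set.image_subset_range _ _) hnPe
    -- claim 2
    have claim2 : ∀ e₁ ∈ GE, ∀ e₂ ∈ GE, 2 ≤ (e₁ ∩ e₂).ncard → P e₁ → P e₂ := by
      intro e₁ he₁ e₂ he₂ hcap h1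
      by_contra h2
      have hle := claim1 e₂ he₂ h2
      have hfin₂ : (φ '' e₂).Finite := (edgeFinite hr (hGr e₂ he₂)).image φ
      have hsub : φ '' (e₁ ∩ e₂) ⊆ φ '' e₂ ∩ Set.range Sum.inr := by
        intro y hy
        exact ⟨Set.image_mono Set.inter_subset_right hy,
          h1 (Set.image_mono Set.inter_subset_left hy)⟩
      have heq : (φ '' (e₁ ∩ e₂)).ncard = (e₁ ∩ e₂).ncard :=
        Set.ncard_image_of_injOn ((hφ e₁ he₁).2.mono Set.inter_subset_left)
      have := Set.ncard_le_ncard hsub (hfin₂.inter_of_left _)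
      omega
    -- claim 3: P is constant on GE
    obtain ⟨l, hnd, hmem, hchain⟩ := htc
    have hlpos : 0 < l.length := by
      obtain ⟨e, he⟩ := hne
      have : e ∈ l := (hmem e).1 he
      exact List.length_pos_iff.2 (by rintro rfl; simp at this)
    have hgetmem : ∀ i : Fin l.length, l.get i ∈ GE := fun i => (hmem _).2 (l.get_mem i)
    have hall : ∀ n (hn : n < l.length),
        (P (l.get ⟨n, hn⟩) ↔ P (l.get ⟨0, hlpos⟩)) := by
      intro n
      induction n using Nat.strong_induction_on with
      | _ n ihn =>
        intro hn
        rcases Nat.eq_zero_or_pos n with rfl | h0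
        · rfl
        · obtain ⟨j, hj, hcard⟩ := hchain ⟨n, hn⟩ h0
          have h₁ : P (l.get ⟨n, hn⟩) → P (l.get j) :=
            claim2 _ (hgetmem _) _ (hgetmem _) hcard
          have h₂ : P (l.get j) → P (l.get ⟨n, hn⟩) :=
            claim2 _ (hgetmem _) _ (hgetmem _) (by rwa [Set.inter_comm])
          have := ihn j hj j.2
          rw [Fin.eta] at this
          exact Iff.trans ⟨h₁, h₂⟩ this
    have claim3 : (∀ e ∈ GE, P e) ∨ (∀ e ∈ GE, ¬ P e) := by
      by_cases h0 : P (l.get ⟨0, hlpos⟩)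
      · left
        intro e he
        obtain ⟨i, hi⟩ := List.mem_iff_get.1 ((hmem e).1 he)
        rw [← hi]
        exact (hall i i.2).2 h0
      · right
        intro e he hPe
        obtain ⟨i, hi⟩ := List.mem_iff_get.1 ((hmem e).1 he)
        rw [← hi] at hPe
        exact h0 ((hall i i.2).1 hPe)
    rcases claim3 with hall' | hall'
    · -- all edges map into the F-copy
      obtain ⟨e₀, he₀⟩ := hne
      have he₀ne : e₀.Nonempty := by
        rw [← Set.ncard_pos (edgeFinite hr (hGr e₀ he₀))] at *
        rw [hGr e₀ he₀]; omega
      obtain ⟨x₀, hx₀⟩ := he₀ne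
      obtain ⟨b₀, hb₀⟩ := hall' e₀ he₀ ⟨x₀, hx₀, rfl⟩
      refine ⟨fun x => Sum.elim (fun _ => b₀) id (φ x), ?_⟩
      intro e he
      have hPe := hall' e he
      rcases (hφ e he).1 with (⟨e', _, hv, hE⟩ | ⟨e', _, hv, b, hE⟩) | ⟨f, hf, hE⟩
      · -- type A impossible: image nonempty and ⊆ inl's
        exfalso
        have hene : e.Nonempty := by
          rw [← Set.ncard_pos (edgeFinite hr (hGr e he))]
          rw [hGr e he]; omega
        obtain ⟨x, hx⟩ := hene
        obtain ⟨b, hb⟩ := hPe ⟨x, hx, rfl⟩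
        have : φ x ∈ φ '' e := ⟨x, hx, rfl⟩
        rw [hE] at this
        rcases this with ⟨a, -, ha⟩
        rw [← hb] at ha
        exact Sum.inl_ne_inr ha
      · -- type B impossible: then image is a singleton
        exfalso
        have hS : Sum.inl '' {x : {a : W // a ≠ v} | (x : W) ∈ e'} = (∅ : Set ({a : W // a ≠ v} ⊕ β)) := by
          ext y
          simp only [Set.mem_empty_iff_false, iff_false]
          intro hy
          have : y ∈ φ '' e := by rw [hE]; exact Set.mem_insert_of_mem _ hy
          obtain ⟨b', hb'⟩ := hPe this
          rcases hy with ⟨a, -, ha⟩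
          rw [← hb'] at ha
          exact Sum.inl_ne_inr ha
        have : (φ '' e).ncard = 1 := by
          rw [hE, hS]
          simp
        rw [hncard e he] at this
        omega
      · -- type C: extract
        constructor
        · have : (fun x => Sum.elim (fun _ => b₀) id (φ x)) '' e
              = Sum.elim (fun _ => b₀) id '' (φ '' e) := by
            rw [Set.image_image]
          rw [this, hE, Set.image_image]
          simpa using hf
        · intro x hx y hy hxy
          have hx' : φ x ∈ Sum.inr '' f := by rw [← hE]; exact ⟨x, hx, rfl⟩
          have hy' : φ y ∈ Sum.inr '' f := by rw [← hE]; exact ⟨y, hy, rfl⟩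
          obtain ⟨bx, -, hbx⟩ := hx'
          obtain ⟨by', -, hby⟩ := hy'
          apply (hφ e he).2 hx hy
          simp only [← hbx, ← hby, Sum.elim_inr, id] at hxy
          rw [← hbx, ← hby, hxy]
    · -- no edge maps into the F-copy: collapse to H and use ih
      apply ih (Sum.elim Subtype.val (fun _ => v) ∘ φ)
      intro e he
      have hinj := (hφ e he).2
      rcases (hφ e he).1 with (⟨e', he', hv, hE⟩ | ⟨e', he', hv, b, hE⟩) | ⟨f, hf, hE⟩
      · constructor
        · have himg : (Sum.elim Subtype.val (fun _ => v) ∘ φ) '' e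
              = Sum.elim Subtype.val (fun _ => v) '' (φ '' e) := (Set.image_comp _ _ _)
          rw [himg, hE, Set.image_image]
          have : (fun x : {a : W // a ≠ v} => Sum.elim (Subtype.val) (fun _ => v) (Sum.inl x : {a : W // a ≠ v} ⊕ β))
              '' {x : {a : W // a ≠ v} | (x : W) ∈ e'} = e' := by
            ext w
            simp only [Sum.elim_inl, Set.mem_image, Set.mem_setOf_eq]
            constructor
            · rintro ⟨a, ha, rfl⟩; exact ha
            · intro hw; exact ⟨⟨w, fun h => hv (h ▸ hw)⟩, hw, rfl⟩
          rwa [this]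
        · intro x hx y hy hxy
          have hx' : φ x ∈ φ '' e := ⟨x, hx, rfl⟩
          have hy' : φ y ∈ φ '' e := ⟨y, hy, rfl⟩
          rw [hE] at hx' hy'
          obtain ⟨ax, -, hax⟩ := hx'
          obtain ⟨ay, -, hay⟩ := hy'
          apply hinj hx hy
          simp only [Function.comp_apply] at hxy
          rw [← hax, ← hay] at hxy ⊢
          simp only [Sum.elim_inl] at hxy
          rw [Subtype.coe_injective hxy]
      · constructor
        · have himg : (Sum.elim Subtype.val (fun _ => v) ∘ φ) '' e
              = Sum.elim Subtype.val (fun _ => v) '' (φ '' e) := (Set.image_comp _ _ _)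
          rw [himg, hE]
          rw [Set.image_insert_eq, Set.image_image]
          have h1 : (fun x : {a : W // a ≠ v} => Sum.elim (Subtype.val) (fun _ => v) (Sum.inl x : {a : W // a ≠ v} ⊕ β))
              '' {x : {a : W // a ≠ v} | (x : W) ∈ e'} = e' \ {v} := by
            ext w
            simp only [Sum.elim_inl, Set.mem_image, Set.mem_setOf_eq, Set.mem_diff,
              Set.mem_singleton_iff]
            constructor
            · rintro ⟨a, ha, rfl⟩; exact ⟨ha, a.2⟩
            · rintro ⟨hw, hwv⟩; exact ⟨⟨w, hwv⟩, hw, rfl⟩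
          rw [h1]
          simp only [Sum.elim_inr]
          rwa [Set.insert_diff_singleton, Set.insert_eq_of_mem hv]
        · intro x hx y hy hxy
          have hx' : φ x ∈ φ '' e := ⟨x, hx, rfl⟩
          have hy' : φ y ∈ φ '' e := ⟨y, hy, rfl⟩
          rw [hE] at hx' hy'
          apply hinj hx hy
          simp only [Function.comp_apply] at hxy
          rcases hx' with hx' | ⟨ax, -, hax⟩ <;> rcases hy' with hy' | ⟨ay, -, hay⟩
          · rw [hx', hy']
          · exfalso
            rw [hx', ← hay] at hxy
            simp only [Sum.elim_inr, Sum.elim_inl] at hxy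
            exact ay.2 hxy.symm
          · exfalso
            rw [hy', ← hax] at hxy
            simp only [Sum.elim_inr, Sum.elim_inl] at hxy
            exact ax.2 hxy
          · rw [← hax, ← hay] at hxy ⊢
            simp only [Sum.elim_inl] at hxy
            rw [Subtype.coe_injective hxy]
      · exact absurd (by show φ '' e ⊆ Set.range Sum.inr; rw [hE]; exact Set.image_subset_range _ _) (hall' e he)

end Aux

/-- For `r ≥ 3`, if `G` is 2-tightly connected and not homomorphic to `F`, then `G` is
not a subgraph of any `F`-iterated blowup. -/
theorem stmt_8 {β : Type u} {γ : Type u} (r : ℕ) (hr : 3 ≤ r)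
    (FE : Set (Set β)) (GE : Set (Set γ))
    (hFr : ∀ e ∈ FE, e.ncard = r) (hGr : ∀ e ∈ GE, e.ncard = r)
    (htc : TightlyConn 2 GE)
    (hnh : ¬ ∃ φ : γ → β, ∀ e ∈ GE, φ '' e ∈ FE ∧ Set.InjOn φ e) :
    ¬ ∃ (V : Type u) (BE : Set (Set V)), IsIterBlowup FE V BE ∧
      ∃ ι : γ → V, Function.Injective ι ∧ ∀ e ∈ GE, ι '' e ∈ BE := by
  rintro ⟨V, BE, hB, ι, hinj, hmemB⟩
  exact hnh (iterBlowup_key r hr FE GE hGr htc hB ι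
    (fun e he => ⟨hmemB e he, hinj.injOn⟩))
end

section
/- Let s ≥ r ≥ 2, let U' = {u_1, ..., u_{r-1}} be an (r-1)-subset of the vertex set U of K^r_{s+1}, and suppose an (r-1)-shadow-homomorphism to K^r_s maps g_{U'}(u_i) = v_i for i ≤ r-1. Then the vertices g_{U' ∪ {u_j}}(u_j) for j = r, ..., s+1 are s - r + 2 pairwise distinct vertices of V(K^r_s) \ {v_1, ..., v_{r-1}}, contradicting |V(K^r_s) \ {v_1,...,v_{r-1}}| = s - r + 1; hence no such shadow-homomorphism exists. -/
/-- Given `s ≥ r ≥ 2`, an `(r-1)`-shadow-homomorphism from `K^r_{s+1}` to `K^r_s`, and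
an `(r-1)`-set `U'` of vertices of `K^r_{s+1}`: the vertices `g_{U' ∪ {u}}(u)` for
`u ∉ U'` avoid the image `g_{U'}(U')` and are pairwise distinct, giving `s - r + 2`
distinct vertices in a set of size `s - r + 1`; hence no such shadow-homomorphism
exists (`False`). -/
theorem stmt_15 (r s : ℕ) (hr : 2 ≤ r) (hrs : r ≤ s)
    (f : Finset (Fin (s + 1)) → Finset (Fin s))
    (g : Finset (Fin (s + 1)) → Fin (s + 1) → Fin s)
    (fE : Finset (Fin (s + 1)) → Finset (Fin s))
    (gE : Finset (Fin (s + 1)) → Fin (s + 1) → Fin s)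
    (h : ShadowHomData (r - 1)
      ((Finset.univ : Finset (Fin (s + 1))).powersetCard r)
      ((Finset.univ : Finset (Fin s)).powersetCard r) f g fE gE)
    (U' : Finset (Fin (s + 1))) (hU' : U'.card = r - 1) :
    ((∀ u ∉ U', gE (insert u U') u ∉ U'.image (g U')) ∧
      (∀ u ∉ U', ∀ u' ∉ U', u ≠ u' →
        gE (insert u U') u ≠ gE (insert u' U') u')) ∧ False := by
  obtain ⟨h1, h2⟩ := h
  -- injectivity of gE E on any r-set E
  have hinj : ∀ E : Finset (Fin (s+1)), E.card = r → Set.InjOn (gE E) E := by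
    intro E hE
    have hmem : E ∈ (Finset.univ : Finset (Fin (s+1))).powersetCard r :=
      Finset.mem_powersetCard_univ.mpr hE
    obtain ⟨hfE, himg, _⟩ := h2 E hmem
    have hc : (E.image (gE E)).card = E.card := by
      rw [himg, hE, Finset.mem_powersetCard_univ.mp hfE]
    exact Finset.card_image_iff.mp hc
  -- consistency helper
  have hcons : ∀ E : Finset (Fin (s+1)), E.card = r → ∀ S ⊆ E, S.card = r - 1 →
      ∀ v ∈ S, gE E v = g S v := by
    intro E hE
    exact (h2 E (Finset.mem_powersetCard_univ.mpr hE)).2.2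
  -- Part 1
  have part1 : ∀ u ∉ U', gE (insert u U') u ∉ U'.image (g U') := by
    intro u hu hmem
    have hEcard : (insert u U').card = r := by
      rw [Finset.card_insert_of_notMem hu, hU']; omega
    obtain ⟨v, hv, hveq⟩ := Finset.mem_image.mp hmem
    have h1' : gE (insert u U') v = g U' v :=
      hcons _ hEcard U' (Finset.subset_insert _ _) hU' v hv
    have heq : gE (insert u U') v = gE (insert u U') u := by rw [h1', hveq]
    have := hinj _ hEcard (Finset.mem_insert_of_mem hv) (Finset.mem_insert_self _ _) heq
    exact hu (this ▸ hv)
  -- Part 2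
  have part2 : ∀ u ∉ U', ∀ u' ∉ U', u ≠ u' →
      gE (insert u U') u ≠ gE (insert u' U') u' := by
    intro u hu u' hu' hne
    obtain ⟨w, hw⟩ : U'.Nonempty := Finset.card_pos.mp (by omega)
    set U'' := U'.erase w with hU''def
    have hU''sub : U'' ⊆ U' := Finset.erase_subset _ _
    have hU''card : U''.card = r - 2 := by
      rw [hU''def, Finset.card_erase_of_mem hw, hU']; omega
    have huU'' : u ∉ U'' := fun hx => hu (hU''sub hx)
    have hu'U'' : u' ∉ U'' := fun hx => hu' (hU''sub hx)
    have hS1card : (insert u U'').card = r - 1 := by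
      rw [Finset.card_insert_of_notMem huU'', hU''card]; omega
    have hS2card : (insert u' U'').card = r - 1 := by
      rw [Finset.card_insert_of_notMem hu'U'', hU''card]; omega
    have hE1card : (insert u U').card = r := by
      rw [Finset.card_insert_of_notMem hu, hU']; omega
    have hE2card : (insert u' U').card = r := by
      rw [Finset.card_insert_of_notMem hu', hU']; omega
    have huE3 : u ∉ insert u' U'' := by
      simp only [Finset.mem_insert]; rintro (h | h)
      · exact hne h
      · exact huU'' h
    have hE3card : (insert u (insert u' U'')).card = r := by
      rw [Finset.card_insert_of_notMem huE3,
        Finset.card_insert_of_notMem hu'U'', hU''card]; omega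
    -- S1 ⊆ E1, S1 ⊆ E3
    have hS1E1 : insert u U'' ⊆ insert u U' := Finset.insert_subset_insert _ hU''sub
    have hS1E3 : insert u U'' ⊆ insert u (insert u' U'') :=
      Finset.insert_subset_insert _ (Finset.subset_insert _ _)
    have hS2E2 : insert u' U'' ⊆ insert u' U' := Finset.insert_subset_insert _ hU''sub
    have hS2E3 : insert u' U'' ⊆ insert u (insert u' U'') :=
      Finset.subset_insert _ _
    have e1 : gE (insert u U') u = g (insert u U'') u :=
      hcons _ hE1card _ hS1E1 hS1card u (Finset.mem_insert_self _ _)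
    have e2 : gE (insert u (insert u' U'')) u = g (insert u U'') u :=
      hcons _ hE3card _ hS1E3 hS1card u (Finset.mem_insert_self _ _)
    have e3 : gE (insert u' U') u' = g (insert u' U'') u' :=
      hcons _ hE2card _ hS2E2 hS2card u' (Finset.mem_insert_self _ _)
    have e4 : gE (insert u (insert u' U'')) u' = g (insert u' U'') u' :=
      hcons _ hE3card _ hS2E3 hS2card u' (Finset.mem_insert_self _ _)
    intro hEq
    have : gE (insert u (insert u' U'')) u = gE (insert u (insert u' U'')) u' := by
      rw [e2, ← e1, hEq, e3, ← e4]
    exact hne (hinj _ hE3card (Finset.mem_insert_self _ _)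
      (Finset.mem_insert_of_mem (Finset.mem_insert_self _ _)) this)
  refine ⟨⟨part1, part2⟩, ?_⟩
  -- derive False by counting
  obtain ⟨u0, hu0⟩ : (U'ᶜ).Nonempty := by
    rw [← Finset.card_pos, Finset.card_compl, hU']
    simp only [Fintype.card_fin]; omega
  have hu0' : u0 ∉ U' := Finset.mem_compl.mp hu0
  have hE0card : (insert u0 U').card = r := by
    rw [Finset.card_insert_of_notMem hu0', hU']; omega
  obtain ⟨⟨e', he', _, hfU'card⟩, himgU'⟩ := h1 U'
    ⟨insert u0 U', Finset.mem_powersetCard_univ.mpr hE0card,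
      Finset.subset_insert _ _, hU'⟩
  have hmaps : ∀ u ∈ U'ᶜ, gE (insert u U') u ∈ (f U')ᶜ := by
    intro u hu
    rw [Finset.mem_compl] at hu ⊢
    rw [← himgU']
    exact part1 u hu
  have hinj2 : Set.InjOn (fun u => gE (insert u U') u) ↑(U'ᶜ) := by
    intro a ha b hb hab
    by_contra hne
    exact part2 a (Finset.mem_compl.mp ha) b (Finset.mem_compl.mp hb) hne hab
  have hle := Finset.card_le_card_of_injOn _ hmaps hinj2
  rw [Finset.card_compl, Finset.card_compl, hU'] at hle
  simp only [Fintype.card_fin] at hle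
  rw [hfU'card] at hle
  omega
end

section
/- Let G and F be r-graphs, k < r, and suppose for each k-subset S of an n-element vertex set one chooses f(S) ∈ ∂_k F and a bijection g_S : S → f(S), and H is the r-graph on [n] whose edges are those r-sets X for which there exist an edge e of F and a bijection g : X → e with g|_S = g_S for every k-subset S of X. Then H is G-free whenever G is not k-shadow-homomorphic to F. -/
/-- The random construction of Theorem 1.6 is `G`-free: for each `k`-subset `S` of the
vertex set `[n]` choose `f S ∈ ∂_k F` and a bijection `g S : S → f S`, and let `H` have
as edges the `r`-sets `X` admitting an edge `e` of `F` and a bijection `gg : X → e`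
with `gg|_S = g S` for every `k`-subset `S` of `X`.  If `G` is not
`k`-shadow-homomorphic to `F`, then `H` contains no copy of `G`. -/
theorem stmt_18 {γ δ : Type*} [DecidableEq δ] (r k n : ℕ) (hk : k < r)
    (GE : Finset (Finset γ)) (FE : Finset (Finset δ))
    (hGr : ∀ e ∈ GE, e.card = r) (hFr : ∀ e ∈ FE, e.card = r)
    (f : Finset (Fin n) → Finset δ) (g : Finset (Fin n) → Fin n → δ)
    (hfg : ∀ S : Finset (Fin n), S.card = k →
      (∃ e ∈ FE, f S ⊆ e ∧ (f S).card = k) ∧ S.image (g S) = f S)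
    (hns : ¬ IsShadowHom k GE FE) :
    ¬ ∃ φ : γ → Fin n, Function.Injective φ ∧ ∀ e ∈ GE,
      (e.image φ) ∈ {X : Finset (Fin n) | X.card = r ∧ ∃ e' ∈ FE, ∃ gg : Fin n → δ,
        X.image gg = e' ∧ ∀ S ⊆ X, S.card = k → ∀ v ∈ S, gg v = g S v} := by
  classical
  rintro ⟨φ, hφ, hφE⟩
  have hQ : ∀ E : Finset γ, ∃ p : Finset δ × (Fin n → δ), E ∈ GE →
      p.1 ∈ FE ∧ (E.image φ).image p.2 = p.1 ∧
      ∀ S ⊆ E.image φ, S.card = k → ∀ v ∈ S, p.2 v = g S v := by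
    intro E
    by_cases h : E ∈ GE
    · obtain ⟨-, e', he', gg, hgg1, hgg2⟩ := hφE E h
      exact ⟨(e', gg), fun _ => ⟨he', hgg1, hgg2⟩⟩
    · exact ⟨(∅, g ∅), fun h' => absurd h' h⟩
  apply hns
  refine ⟨fun S => f (S.image φ), fun S v => g (S.image φ) (φ v),
    fun E => (hQ E).choose.1, fun E v => (hQ E).choose.2 (φ v), ?_, ?_⟩
  · rintro S ⟨e, he, hSe, hSk⟩
    have hSk' : (S.image φ).card = k := by
      rw [Finset.card_image_of_injective _ hφ]; exact hSk
    obtain ⟨h1, h2⟩ := hfg _ hSk'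
    refine ⟨h1, ?_⟩
    beta_reduce
    rw [← h2, Finset.image_image]
    rfl
  · intro E hE
    obtain ⟨h1, h2, h3⟩ := (hQ E).choose_spec hE
    refine ⟨h1, ?_, ?_⟩
    · beta_reduce
      rw [← h2, Finset.image_image]
      rfl
    · intro S hSE hSk v hv
      exact h3 (S.image φ) (Finset.image_subset_image hSE)
        (by rw [Finset.card_image_of_injective _ hφ]; exact hSk)
        (φ v) (Finset.mem_image_of_mem φ hv)
end
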